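/- For every finite poset P and fixed t ≥ 2, either sat*([t]^n, P) = O(1) or sat*([t]^n, P) = Ω(√n) as n → ∞. -/

import Mathlib

open Filter

/-- An induced copy of the poset `P` inside the family `F`. -/
def InducedCopy (P : Type) [PartialOrder P] {α : Type} [PartialOrder α]
    (F : Set α) : Prop :=
  ∃ φ : P → α, Function.Injective φ ∧ (∀ x, φ x ∈ F) ∧ ∀ x y, φ x ≤ φ y ↔ x ≤ y

/-- `F` is induced `P`-free. -/
def PFree (P : Type) [PartialOrder P] {α : Type} [PartialOrder α] (F : Set α) : Prop :=
  ¬ InducedCopy P F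

/-- `F` is induced `P`-free and induced `P`-saturated. -/
def PSaturated (P : Type) [PartialOrder P] {α : Type} [PartialOrder α] (F : Set α) : Prop :=
  PFree P F ∧ ∀ g ∉ F, InducedCopy P (insert g F)

/-- The lifting operator `L_i`, copying coordinate `i` into a new last coordinate. -/
def lift {t n : ℕ} (i : Fin n) (f : Fin n → Fin t) : Fin (n + 1) → Fin t :=
  Fin.snoc f (f i)

/-- The coordinate-dropping operator `D_i`. -/
def drop {t n : ℕ} (i : Fin (n + 1)) (f : Fin (n + 1) → Fin t) : Fin n → Fin t :=
  fun x => f (i.succAbove x)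

/-- Coordinate `i` is separating for `F`. -/
def Separating {t n : ℕ} (F : Set (Fin n → Fin t)) (i : Fin n) : Prop :=
  ∃ f ∈ F, ∃ f' ∈ F, f ≠ f' ∧ (∀ x, x ≠ i → f x ≤ f' x) ∧ f' i < f i

/-- The induced saturation number `sat*([t]^n, P)`. -/
noncomputable def satStar (t n : ℕ) (P : Type) [PartialOrder P] : ℕ :=
  sInf {m | ∃ F : Set (Fin n → Fin t), PSaturated P F ∧ F.ncard = m}

/-- The antichain on `k` elements. -/
def AC (k : ℕ) := Fin k

instance (k : ℕ) : PartialOrder (AC k) where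
  le := Eq
  le_refl _ := rfl
  le_trans _ _ _ h h' := Eq.trans h h'
  le_antisymm _ _ h _ := h

/-- The unique cover twin property. -/
def UCTP (P : Type) [PartialOrder P] : Prop :=
  ∀ x y : P, y ⋖ x → ∃ y', y' ≠ y ∧ y' ≠ x ∧ y' ⋖ x

/-!
If some saturated family `F ⊆ [t]^n` has a non-separating coordinate `i`, rounding that
coordinate to `{⊥, ⊤}` and then repeatedly duplicating it yields saturated families of size `|F|`
in every dimension `≥ n`. Both maps are order embeddings on the family, and each new point `g` is
related to the image exactly as some `update g' i c` is related to `F`. Indeed, as `i` is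
non-separating, the `i`-values of members below `g` lie under those of members above `g`, so a cut
value `c` exists unless a member below exceeds the lower threshold set by `g` while a member above
stays under the upper one; monotonicity of the rounding, and the values `⊥, ⊤` for the
duplication, exclude this. Otherwise every saturated family separates all coordinates, and
distinct coordinates need distinct separating pairs, so `n ≤ |F| ^ 2`.
-/

open Function

section Transfer

variable {P α β : Type} [PartialOrder P] [PartialOrder α] [PartialOrder β]

theorem injOn_of_le_iff {F : Set α} {Θ : α → β}
    (hΘ : ∀ u ∈ F, ∀ v ∈ F, Θ u ≤ Θ v ↔ u ≤ v) : Set.InjOn Θ F :=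
  fun u hu v hv h => le_antisymm ((hΘ u hu v hv).1 h.le) ((hΘ v hv u hu).1 h.ge)

theorem InducedCopy.of_le_iff {F : Set α} (φ : P → α) (hφF : ∀ x, φ x ∈ F)
    (hφ : ∀ x y, φ x ≤ φ y ↔ x ≤ y) : InducedCopy P F :=
  ⟨φ, fun x y h => le_antisymm ((hφ x y).1 h.le) ((hφ y x).1 h.ge), hφF, hφ⟩

theorem InducedCopy.map {F : Set α} {G : Set β} (Θ : α → β) (hmaps : Set.MapsTo Θ F G)
    (hΘ : ∀ u ∈ F, ∀ v ∈ F, Θ u ≤ Θ v ↔ u ≤ v) (h : InducedCopy P F) : InducedCopy P G := by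
  obtain ⟨φ, -, hφF, hφ⟩ := h
  exact .of_le_iff (Θ ∘ φ) (fun x => hmaps (hφF x))
    fun x y => (hΘ _ (hφF x) _ (hφF y)).trans (hφ x y)

theorem InducedCopy.of_image {F : Set α} (Θ : α → β)
    (hΘ : ∀ u ∈ F, ∀ v ∈ F, Θ u ≤ Θ v ↔ u ≤ v) (h : InducedCopy P (Θ '' F)) :
    InducedCopy P F := by
  obtain ⟨φ, -, hφF, hφ⟩ := h
  choose ψ hψF hψ using hφF
  exact .of_le_iff ψ hψF fun x y => by rw [← hΘ _ (hψF x) _ (hψF y), hψ, hψ, hφ]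

theorem PSaturated.image {F : Set α} (hF : PSaturated P F) (Θ : α → β)
    (hΘ : ∀ u ∈ F, ∀ v ∈ F, Θ u ≤ Θ v ↔ u ≤ v)
    (hext : ∀ g ∉ Θ '' F, ∃ p, ∀ f ∈ F, (g ≤ Θ f ↔ p ≤ f) ∧ (Θ f ≤ g ↔ f ≤ p)) :
    PSaturated P (Θ '' F) := by
  classical
  refine ⟨fun h => hF.1 (h.of_image Θ hΘ), fun g hg => ?_⟩
  obtain ⟨p, hp⟩ := hext g hg
  have hpF : p ∉ F := fun hpF =>
    hg ⟨p, hpF, le_antisymm ((hp p hpF).2.2 le_rfl) ((hp p hpF).1.2 le_rfl)⟩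
  have hupd : ∀ u ∈ F, update Θ p g u = Θ u := fun u hu =>
    update_of_ne (ne_of_mem_of_not_mem hu hpF) _ _
  refine (hF.2 p hpF).map (update Θ p g) ?_ ?_
  · rintro u (rfl | hu)
    · simp
    · rw [hupd u hu]; exact Set.mem_insert_of_mem _ ⟨u, hu, rfl⟩
  · rintro u (rfl | hu) v (rfl | hv)
    · simp
    · rw [update_self, hupd v hv, (hp v hv).1]
    · rw [update_self, hupd u hu, (hp u hu).2]
    · rw [hupd u hu, hupd v hv, hΘ u hu v hv]

end Transfer

theorem exists_cut {α : Type*} [LinearOrder α] [Finite α] {A B : Set α}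
    (hAB : ∀ a ∈ A, ∀ b ∈ B, a ≤ b) {m M : α} (hgap : ∀ a ∈ A, ∀ b ∈ B, a ≤ m ∨ M ≤ b) :
    ∃ c, (∀ b ∈ B, c ≤ b ↔ M ≤ b) ∧ ∀ a ∈ A, a ≤ c ↔ a ≤ m := by
  by_cases h : ∃ a ∈ A, m < a ∧ a ≤ M
  · obtain ⟨a, ha, hma, haM⟩ := h
    exact ⟨m, fun b hb => ⟨fun _ => (hgap a ha b hb).resolve_left hma.not_ge,
      fun hMb => (hma.le.trans haM).trans hMb⟩, fun _ _ => Iff.rfl⟩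
  obtain ⟨c, hc, hmax⟩ := Set.exists_max_image (insert M {a ∈ A | a ≤ m}) id
    (Set.toFinite _) (Set.insert_nonempty _ _)
  refine ⟨c, fun b hb => ⟨fun hcb => (hmax M (Set.mem_insert _ _)).trans hcb, fun hMb => ?_⟩,
    fun a ha => ⟨fun hac => ?_, fun ham => hmax a (Or.inr ⟨ha, ham⟩)⟩⟩
  · rcases hc with rfl | ⟨hcA, -⟩
    exacts [hMb, hAB c hcA b hb]
  · rcases hc with rfl | ⟨-, hcm⟩
    exacts [not_lt.1 fun hma => h ⟨a, ha, hma, hac⟩, hac.trans hcm]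

section Hypergrid

variable {t n : ℕ} {F : Set (Fin n → Fin t)} {i : Fin n}

theorem not_separating_iff :
    ¬ Separating F i ↔ ∀ f ∈ F, ∀ f' ∈ F, (∀ j ≠ i, f j ≤ f' j) → f i ≤ f' i := by
  refine ⟨fun hns f hf f' hf' hle => ?_, fun h ⟨f, hf, f', hf', _, hle, hlt⟩ => ?_⟩
  · rcases eq_or_ne f f' with rfl | hne
    · exact le_rfl
    · exact not_lt.1 fun hlt => hns ⟨f, hf, f', hf', hne, hle, hlt⟩
  · exact (h f hf f' hf' hle).not_gt hlt

theorem exists_update_le_iff (hns : ¬ Separating F i) (g : Fin n → Fin t) {m M : Fin t}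
    (hgap : ∀ f ∈ F, ∀ f' ∈ F, f i ≤ f' i → f i ≤ m ∨ M ≤ f' i) :
    ∃ c, ∀ f ∈ F, (update g i c ≤ f ↔ M ≤ f i ∧ ∀ j ≠ i, g j ≤ f j) ∧
      (f ≤ update g i c ↔ f i ≤ m ∧ ∀ j ≠ i, f j ≤ g j) := by
  have hle : ∀ f ∈ F, ∀ f' ∈ F, (∀ j ≠ i, f j ≤ g j) → (∀ j ≠ i, g j ≤ f' j) → f i ≤ f' i :=
    fun f hf f' hf' hfg hgf' =>
      not_separating_iff.1 hns f hf f' hf' fun j hj => (hfg j hj).trans (hgf' j hj)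
  obtain ⟨c, hcB, hcA⟩ := exists_cut (A := (· i) '' {f ∈ F | ∀ j ≠ i, f j ≤ g j})
    (B := (· i) '' {f ∈ F | ∀ j ≠ i, g j ≤ f j})
    (by rintro _ ⟨f, ⟨hf, hfg⟩, rfl⟩ _ ⟨f', ⟨hf', hgf'⟩, rfl⟩; exact hle f hf f' hf' hfg hgf')
    (by
      rintro _ ⟨f, ⟨hf, hfg⟩, rfl⟩ _ ⟨f', ⟨hf', hgf'⟩, rfl⟩
      exact hgap f hf f' hf' (hle f hf f' hf' hfg hgf'))
  refine ⟨c, fun f hf => ⟨?_, ?_⟩⟩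
  · rw [update_le_iff]
    exact and_congr_left fun hgf => hcB _ ⟨f, ⟨hf, hgf⟩, rfl⟩
  · rw [le_update_iff]
    exact and_congr_left fun hfg => hcA _ ⟨f, ⟨hf, hfg⟩, rfl⟩

def roundAt (ρ : Fin t → Fin t) (i : Fin n) (f : Fin n → Fin t) : Fin n → Fin t :=
  update f i (ρ (f i))

theorem roundAt_le_roundAt_iff (hns : ¬ Separating F i) {ρ : Fin t → Fin t} (hρ : Monotone ρ)
    {f f' : Fin n → Fin t} (hf : f ∈ F) (hf' : f' ∈ F) :
    roundAt ρ i f ≤ roundAt ρ i f' ↔ f ≤ f' := by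
  unfold roundAt
  rw [update_le_update_iff]
  refine ⟨fun ⟨_, hle⟩ j => ?_, fun hle => ⟨hρ (hle i), fun j _ => hle j⟩⟩
  rcases eq_or_ne j i with rfl | hj
  exacts [not_separating_iff.1 hns f hf f' hf' hle, hle j hj]

theorem not_separating_image_roundAt (hns : ¬ Separating F i) {ρ : Fin t → Fin t}
    (hρ : Monotone ρ) : ¬ Separating (roundAt ρ i '' F) i := by
  refine not_separating_iff.2 ?_
  rintro _ ⟨f, hf, rfl⟩ _ ⟨f', hf', rfl⟩ hle
  simp only [roundAt, update_self]
  refine hρ (not_separating_iff.1 hns f hf f' hf' fun j hj => ?_)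
  simpa [roundAt, update_of_ne hj] using hle j hj

theorem PSaturated.image_roundAt {P : Type} [PartialOrder P] (hF : PSaturated P F)
    (hns : ¬ Separating F i) {ρ l u : Fin t → Fin t} (hl : GaloisConnection l ρ)
    (hu : GaloisConnection ρ u) : PSaturated P (roundAt ρ i '' F) := by
  refine hF.image _ (fun f hf f' hf' => roundAt_le_roundAt_iff hns hl.monotone_u hf hf')
    fun g _ => ?_
  obtain ⟨c, hc⟩ := exists_update_le_iff hns g (m := u (g i)) (M := l (g i))
    fun f _ f' _ hff' => by
      rw [← hu.le_iff_le, hl.le_iff_le]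
      exact (le_total (ρ (f i)) (g i)).imp_right fun h => h.trans (hl.monotone_u hff')
  refine ⟨update g i c, fun f hf => ⟨?_, ?_⟩⟩
  · rw [(hc f hf).1, roundAt, le_update_iff, hl.le_iff_le]
  · rw [(hc f hf).2, roundAt, update_le_iff, hu.le_iff_le]

end Hypergrid

section RoundDown

variable {α : Type*} [LinearOrder α] [BoundedOrder α]

def roundDown (a : α) : α := if a = ⊤ then ⊤ else ⊥

theorem roundDown_eq_bot_or_eq_top (a : α) : roundDown a = ⊥ ∨ roundDown a = ⊤ := by
  unfold roundDown
  split_ifs <;> simp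

theorem gc_roundDown_left :
    GaloisConnection (fun b : α => if b = ⊥ then ⊥ else ⊤) roundDown := by
  intro b a
  by_cases hb : b = ⊥ <;> by_cases ha : a = ⊤ <;> simp [roundDown, hb, ha]

theorem gc_roundDown_right [PredOrder α] :
    GaloisConnection roundDown fun b : α => if b = ⊤ then ⊤ else Order.pred ⊤ := by
  intro a b
  by_cases hb : b = ⊤
  · by_cases ha : a = ⊤ <;> simp [roundDown, ha, hb]
  · have hpred : ∀ c : α, c ≤ Order.pred ⊤ ↔ c < ⊤ := fun _ =>
      Order.le_pred_iff_of_not_isMin (not_isMin_of_lt (lt_top_iff_ne_top.2 hb))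
    by_cases ha : a = ⊤ <;> simp [roundDown, ha, hb, hpred, lt_top_iff_ne_top]

end RoundDown

theorem Pi.le_iff_le_and_forall_ne {ι : Type*} [DecidableEq ι] {π : ι → Type*}
    [∀ i, Preorder (π i)] {x y : ∀ i, π i} (i : ι) : x ≤ y ↔ x i ≤ y i ∧ ∀ j ≠ i, x j ≤ y j := by
  conv_lhs => rw [← update_eq_self i y]
  exact le_update_iff

section Lift

variable {t n : ℕ} {F : Set (Fin n → Fin t)} {i : Fin n}

theorem le_lift_iff {g : Fin (n + 1) → Fin t} {f : Fin n → Fin t} :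
    g ≤ lift i f ↔ max (g i.castSucc) (g (Fin.last n)) ≤ f i ∧ ∀ j ≠ i, Fin.init g j ≤ f j := by
  have hsnoc : g ≤ lift i f ↔ g (Fin.last n) ≤ f i ∧ Fin.init g ≤ f := by
    simp [lift, Pi.le_def, Fin.forall_iff_castSucc, Fin.init]
  rw [hsnoc, Pi.le_iff_le_and_forall_ne i, max_le_iff]
  simp only [Fin.init]
  tauto

theorem lift_le_iff {g : Fin (n + 1) → Fin t} {f : Fin n → Fin t} :
    lift i f ≤ g ↔ f i ≤ min (g i.castSucc) (g (Fin.last n)) ∧ ∀ j ≠ i, f j ≤ Fin.init g j := by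
  have hsnoc : lift i f ≤ g ↔ f i ≤ g (Fin.last n) ∧ f ≤ Fin.init g := by
    simp [lift, Pi.le_def, Fin.forall_iff_castSucc, Fin.init]
  rw [hsnoc, Pi.le_iff_le_and_forall_ne i, le_min_iff]
  simp only [Fin.init]
  tauto

theorem lift_le_lift_iff {f f' : Fin n → Fin t} : lift i f ≤ lift i f' ↔ f ≤ f' := by
  simpa [lift, Pi.le_def, Fin.forall_iff_castSucc] using fun h => h i

theorem not_separating_image_lift : ¬ Separating (lift i '' F) (Fin.last n) := by
  refine not_separating_iff.2 ?_
  rintro _ ⟨f, hf, rfl⟩ _ ⟨f', hf', rfl⟩ hle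
  have hff' : f ≤ f' := fun j => by
    simpa [lift] using hle j.castSucc (Fin.castSucc_ne_last j)
  simpa [lift] using hff' i

theorem PSaturated.image_lift [NeZero t] {P : Type} [PartialOrder P] (hF : PSaturated P F)
    (hns : ¬ Separating F i) (hbin : ∀ f ∈ F, f i = ⊥ ∨ f i = ⊤) :
    PSaturated P (lift i '' F) := by
  refine hF.image _ (fun _ _ _ _ => lift_le_lift_iff) fun g _ => ?_
  obtain ⟨c, hc⟩ := exists_update_le_iff hns (Fin.init g)
    (m := min (g i.castSucc) (g (Fin.last n))) (M := max (g i.castSucc) (g (Fin.last n)))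
    fun f hf f' _ hff' => by
      rcases hbin f hf with h | h
      · exact .inl (h ▸ bot_le)
      · exact .inr (le_top.trans (h ▸ hff'))
  refine ⟨update (Fin.init g) i c, fun f hf => ⟨?_, ?_⟩⟩
  · rw [(hc f hf).1, le_lift_iff]
  · rw [(hc f hf).2, lift_le_iff]

end Lift

theorem exists_pSaturated (P α : Type) [PartialOrder P] [Nonempty P] [PartialOrder α]
    [Finite α] : ∃ F : Set α, PSaturated P F := by
  obtain ⟨F, hF⟩ := Set.Finite.exists_maximal (s := {F : Set α | PFree P F}) (Set.toFinite _)
    ⟨∅, fun ⟨φ, _, hφ, _⟩ => hφ (Classical.arbitrary P)⟩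
  exact ⟨F, hF.prop, fun g hg => not_not.1 fun h => hg (hF.mem_of_prop_insert h)⟩

section SatStar

variable {t n : ℕ} {P : Type} [PartialOrder P]

theorem satStar_le_ncard {F : Set (Fin n → Fin t)} (hF : PSaturated P F) :
    satStar t n P ≤ F.ncard :=
  Nat.sInf_le ⟨F, hF, rfl⟩

theorem exists_pSaturated_ncard_eq_satStar [Nonempty P] :
    ∃ F : Set (Fin n → Fin t), PSaturated P F ∧ F.ncard = satStar t n P := by
  obtain ⟨F, hF⟩ := exists_pSaturated P (Fin n → Fin t)
  exact Nat.sInf_mem (s := {m | ∃ F : Set (Fin n → Fin t), PSaturated P F ∧ F.ncard = m})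
    ⟨F.ncard, F, hF, rfl⟩

theorem satStar_eq_zero_of_isEmpty [IsEmpty P] : satStar t n P = 0 :=
  Nat.sInf_eq_zero.2 <| .inr <| Set.eq_empty_of_forall_notMem fun _ ⟨_, hF, _⟩ =>
    hF.1 (.of_le_iff isEmptyElim isEmptyElim isEmptyElim)

theorem satStar_le_pow : satStar t n P ≤ t ^ n := by
  cases isEmpty_or_nonempty P
  · simp [satStar_eq_zero_of_isEmpty]
  · obtain ⟨F, -, hF⟩ := exists_pSaturated_ncard_eq_satStar (t := t) (n := n) (P := P)
    simpa [← hF] using Set.ncard_le_card F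

theorem le_ncard_sq_of_forall_separating {F : Set (Fin n → Fin t)}
    (hF : ∀ i, Separating F i) : n ≤ F.ncard ^ 2 := by
  choose f hf f' hf' _ hle hlt using hF
  have hinj : Injective fun i => ((⟨f i, hf i⟩ : F), (⟨f' i, hf' i⟩ : F)) := by
    intro i j hij
    simp only [Prod.mk.injEq, Subtype.mk.injEq] at hij
    by_contra hne
    exact (hle j i hne).not_gt (by rw [← hij.1, ← hij.2]; exact hlt i)
  simpa [Nat.card_coe_set_eq, sq] using Nat.card_le_card_of_injective _ hinj

theorem le_satStar_sq [Nonempty P]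
    (hsep : ∀ F : Set (Fin n → Fin t), PSaturated P F → ∀ i, Separating F i) :
    n ≤ satStar t n P ^ 2 := by
  obtain ⟨F, hF, hcard⟩ := exists_pSaturated_ncard_eq_satStar (t := t) (n := n) (P := P)
  exact hcard ▸ le_ncard_sq_of_forall_separating (hsep F hF)

variable [NeZero t] {F : Set (Fin n → Fin t)} {i : Fin n}

theorem exists_pSaturated_ncard_eq_of_not_separating (hF : PSaturated P F)
    (hns : ¬ Separating F i) (k : ℕ) :
    ∃ G : Set (Fin (n + k) → Fin t), PSaturated P G ∧ G.ncard = F.ncard := by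
  suffices ∀ k, ∃ (G : Set (Fin (n + k) → Fin t)) (j : Fin (n + k)), PSaturated P G ∧
      ¬ Separating G j ∧ (∀ g ∈ G, g j = ⊥ ∨ g j = ⊤) ∧ G.ncard = F.ncard by
    obtain ⟨G, -, hG, -, -, hcard⟩ := this k
    exact ⟨G, hG, hcard⟩
  intro k
  induction k with
  | zero =>
    refine ⟨roundAt roundDown i '' F, i, hF.image_roundAt hns gc_roundDown_left gc_roundDown_right,
      not_separating_image_roundAt hns gc_roundDown_left.monotone_u, ?_,
      (injOn_of_le_iff fun f hf f' hf' =>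
        roundAt_le_roundAt_iff hns gc_roundDown_left.monotone_u hf hf').ncard_image⟩
    rintro _ ⟨f, -, rfl⟩
    simpa [roundAt] using roundDown_eq_bot_or_eq_top (f i)
  | succ k ih =>
    obtain ⟨G, j, hG, hGj, hbin, hcard⟩ := ih
    refine ⟨lift j '' G, Fin.last _, hG.image_lift hGj hbin, not_separating_image_lift, ?_,
      (injOn_of_le_iff fun _ _ _ _ => lift_le_lift_iff).ncard_image.trans hcard⟩
    rintro _ ⟨g, hg, rfl⟩
    simpa [lift] using hbin g hg

theorem satStar_le_of_not_separating (hF : PSaturated P F) (hns : ¬ Separating F i) {m : ℕ}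
    (hm : n ≤ m) : satStar t m P ≤ F.ncard := by
  obtain ⟨k, rfl⟩ := Nat.exists_eq_add_of_le hm
  obtain ⟨G, hG, hcard⟩ := exists_pSaturated_ncard_eq_of_not_separating hF hns k
  exact hcard ▸ satStar_le_ncard hG

end SatStar

theorem stmt13_general (t : ℕ) (ht : 2 ≤ t) (P : Type) [PartialOrder P] :
    (∃ C : ℕ, ∀ n : ℕ, satStar t n P ≤ C) ∨
    (∃ c : ℝ, 0 < c ∧ ∀ᶠ n : ℕ in atTop, c * Real.sqrt n ≤ (satStar t n P : ℝ)) := by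
  have : NeZero t := ⟨by omega⟩
  by_cases hsep : ∃ (n : ℕ) (F : Set (Fin n → Fin t)) (i : Fin n),
      PSaturated P F ∧ ¬ Separating F i
  · obtain ⟨n, F, i, hF, hns⟩ := hsep
    refine .inl ⟨max F.ncard (t ^ n), fun m => ?_⟩
    rcases le_total n m with hnm | hmn
    · exact (satStar_le_of_not_separating hF hns hnm).trans (le_max_left _ _)
    · exact satStar_le_pow.trans <| (Nat.pow_le_pow_right (by omega) hmn).trans (le_max_right _ _)
  cases isEmpty_or_nonempty P
  · exact .inl ⟨0, fun n => satStar_eq_zero_of_isEmpty.le⟩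
  · refine .inr ⟨1, one_pos, .of_forall fun n => ?_⟩
    rw [one_mul, Real.sqrt_le_left (Nat.cast_nonneg _)]
    exact_mod_cast le_satStar_sq fun F hF i => not_not.1 fun hi => hsep ⟨n, F, i, hF, hi⟩

theorem stmt13 (t : ℕ) (ht : 2 ≤ t) (P : Type) [PartialOrder P] [Finite P]
    (hembed : ∃ n₀ : ℕ, InducedCopy P (Set.univ : Set (Fin n₀ → Fin t))) :
    (∃ C : ℕ, ∀ n : ℕ, satStar t n P ≤ C) ∨
    (∃ c : ℝ, 0 < c ∧ ∀ᶠ n : ℕ in atTop, c * Real.sqrt n ≤ (satStar t n P : ℝ)) :=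
  stmt13_general t ht P
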